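/- The FO(<,+1) formula φ(x) := ∃y ∃z (x < y < z < x+1 ∧ P(y) ∧ P(z)), asserting that the predicate P holds at two distinct points strictly within one time unit in the future, is equivalent to the MTL formula φ† := ◇_{(0,1/2)}(P ∧ ◇_{(0,1/2)} P) ∨ ◇_{={1}}(◆_{(0,1/2)}(P ∧ ◆_{(0,1/2)} P)) ∨ (◇_{(0,1/2)} P ∧ ◇_{(1/2,1)} P), i.e., for all signals f and all r ∈ ℝ: f ⊨ φ[r] if and only if f, r ⊨ φ†. -/

import Mathlib

open scoped NNRat

/-- An interval `I ⊆ (0,∞)` with endpoints in `ℚ≥0 ∪ {∞}`, used to constrain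
MTL temporal operators.  `lo` is the left endpoint, `hi` the right endpoint
(`⊤` meaning `∞`), and the two Booleans record whether the corresponding
endpoint is included. -/
structure MTLIv where
  lo : ℚ≥0
  hi : WithTop ℚ≥0
  loClosed : Bool
  hiClosed : Bool

namespace MTLIv

/-- Membership of a real number in the interval (intersected with `(0,∞)`). -/
def mem (I : MTLIv) (t : ℝ) : Prop :=
  0 < t ∧
  (if I.loClosed then (I.lo : ℝ) ≤ t else (I.lo : ℝ) < t) ∧
  (∀ q : ℚ≥0, I.hi = (q : WithTop ℚ≥0) →
    (if I.hiClosed then t ≤ (q : ℝ) else t < (q : ℝ)))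

/-- An interval is bounded if its right endpoint is not `∞`. -/
def Bounded (I : MTLIv) : Prop := I.hi ≠ ⊤

/-- Scaling an interval by a positive rational: `r • I = {r·t : t ∈ I}`. -/
def scale (r : ℚ≥0) (I : MTLIv) : MTLIv :=
  ⟨r * I.lo, I.hi.map (fun q => r * q), I.loClosed, I.hiClosed⟩

end MTLIv

/-- The interval `(0,∞)`. -/
def ivInf : MTLIv := ⟨0, ⊤, false, false⟩
/-- The interval `(0,q)`. -/
def ivLT (q : ℚ≥0) : MTLIv := ⟨0, (q : WithTop ℚ≥0), false, false⟩
/-- The singleton interval `{q}`. -/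
def ivEQ (q : ℚ≥0) : MTLIv := ⟨q, (q : WithTop ℚ≥0), true, true⟩
/-- The open interval `(p,q)`. -/
def ivOO (p q : ℚ≥0) : MTLIv := ⟨p, (q : WithTop ℚ≥0), false, false⟩

/-- Formulas of Metric Temporal Logic over atomic propositions `P`:
`φ ::= true | p | φ ∧ φ | ¬φ | φ U_I φ | φ S_I φ`.
In `until I φ ψ` (i.e. `φ U_I ψ`) the witness formula is `ψ`, and similarly
for `since`. -/
inductive MTL (P : Type*) where
  | tt : MTL P
  | atom : P → MTL P
  | and : MTL P → MTL P → MTL P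
  | not : MTL P → MTL P
  | until : MTLIv → MTL P → MTL P → MTL P
  | since : MTLIv → MTL P → MTL P → MTL P

namespace MTL

variable {P : Type*}

/-- Satisfaction of an MTL formula by a signal `f : ℝ → Set P` at time `r`. -/
def sat (f : ℝ → Set P) : MTL P → ℝ → Prop
  | .tt, _ => True
  | .atom p, r => p ∈ f r
  | .and φ ψ, r => φ.sat f r ∧ ψ.sat f r
  | .not φ, r => ¬ φ.sat f r
  | .until I φ ψ, r =>
      ∃ t, r < t ∧ I.mem (t - r) ∧ ψ.sat f t ∧ ∀ u, r < u → u < t → φ.sat f u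
  | .since I φ ψ, r =>
      ∃ t, t < r ∧ I.mem (r - t) ∧ ψ.sat f t ∧ ∀ u, t < u → u < r → φ.sat f u

/-- Two MTL formulas are equivalent if they are satisfied by exactly the same
pairs (signal, time point). -/
def Equiv (φ ψ : MTL P) : Prop :=
  ∀ (f : ℝ → Set P) (r : ℝ), φ.sat f r ↔ ψ.sat f r

/-- Disjunction, as a derived connective. -/
def or (φ ψ : MTL P) : MTL P := .not (.and (.not φ) (.not ψ))

/-- `◇_I φ := true U_I φ`. -/
def dia (I : MTLIv) (φ : MTL P) : MTL P := .until I .tt φ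

/-- `□_I φ := ¬◇_I ¬φ`. -/
def box (I : MTLIv) (φ : MTL P) : MTL P := .not (dia I (.not φ))

/-- `◆_I φ := true S_I φ`. -/
def pdia (I : MTLIv) (φ : MTL P) : MTL P := .since I .tt φ

/-- `■_I φ := ¬◆_I ¬φ`. -/
def pbox (I : MTLIv) (φ : MTL P) : MTL P := .not (pdia I (.not φ))

/-- `K⁺φ := ¬((¬φ) U true)`. -/
def kplus (φ : MTL P) : MTL P := .not (.until ivInf (.not φ) .tt)

/-- A formula is bounded if all intervals occurring in its temporal
operators are bounded. -/
def Bounded : MTL P → Prop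
  | .tt => True
  | .atom _ => True
  | .and φ ψ => φ.Bounded ∧ ψ.Bounded
  | .not φ => φ.Bounded
  | .until I φ ψ => I.Bounded ∧ φ.Bounded ∧ ψ.Bounded
  | .since I φ ψ => I.Bounded ∧ φ.Bounded ∧ ψ.Bounded

/-- All `S_I` operators occurring in the formula are bounded
(`U_I` operators are unrestricted). -/
def SinceOpsBounded : MTL P → Prop
  | .tt => True
  | .atom _ => True
  | .and φ ψ => φ.SinceOpsBounded ∧ ψ.SinceOpsBounded
  | .not φ => φ.SinceOpsBounded
  | .until _ φ ψ => φ.SinceOpsBounded ∧ ψ.SinceOpsBounded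
  | .since I φ ψ => I.Bounded ∧ φ.SinceOpsBounded ∧ ψ.SinceOpsBounded

/-- All `U_I` operators occurring in the formula are bounded
(`S_I` operators are unrestricted). -/
def UntilOpsBounded : MTL P → Prop
  | .tt => True
  | .atom _ => True
  | .and φ ψ => φ.UntilOpsBounded ∧ ψ.UntilOpsBounded
  | .not φ => φ.UntilOpsBounded
  | .until I φ ψ => I.Bounded ∧ φ.UntilOpsBounded ∧ ψ.UntilOpsBounded
  | .since _ φ ψ => φ.UntilOpsBounded ∧ ψ.UntilOpsBounded

/-- No unbounded temporal operator occurs within the scope of a bounded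
temporal operator. -/
def NoUnboundedInBounded : MTL P → Prop
  | .tt => True
  | .atom _ => True
  | .and φ ψ => φ.NoUnboundedInBounded ∧ ψ.NoUnboundedInBounded
  | .not φ => φ.NoUnboundedInBounded
  | .until I φ ψ => (I.Bounded → φ.Bounded ∧ ψ.Bounded) ∧
      φ.NoUnboundedInBounded ∧ ψ.NoUnboundedInBounded
  | .since I φ ψ => (I.Bounded → φ.Bounded ∧ ψ.Bounded) ∧
      φ.NoUnboundedInBounded ∧ ψ.NoUnboundedInBounded

/-- The future-reach of an MTL formula, with values in `ℚ≥0 ∪ {∞}`. -/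
def fr : MTL P → WithTop ℚ≥0
  | .tt => 0
  | .atom _ => 0
  | .and φ ψ => max φ.fr ψ.fr
  | .not φ => φ.fr
  | .until I φ ψ => I.hi + max φ.fr ψ.fr
  | .since I φ ψ => max φ.fr (ψ.fr.map (fun a => a - I.lo))

/-- The past-reach of an MTL formula, with values in `ℚ≥0 ∪ {∞}`. -/
def pr : MTL P → WithTop ℚ≥0
  | .tt => 0
  | .atom _ => 0
  | .and φ ψ => max φ.pr ψ.pr
  | .not φ => φ.pr
  | .since I φ ψ => I.hi + max φ.pr ψ.pr
  | .until I φ ψ => max φ.pr (ψ.pr.map (fun a => a - I.lo))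

/-- Boolean combinations of formulas from the class `C`. -/
inductive BoolComb (C : MTL P → Prop) : MTL P → Prop
  | base {φ} : C φ → BoolComb C φ
  | tt : BoolComb C .tt
  | and {φ ψ} : BoolComb C φ → BoolComb C ψ → BoolComb C (.and φ ψ)
  | not {φ} : BoolComb C φ → BoolComb C (.not φ)

/-- Scaling an MTL formula by a positive rational: every constraining
interval `I` is replaced by `rI`. -/
def scale (r : ℚ≥0) : MTL P → MTL P
  | .tt => .tt
  | .atom p => .atom p
  | .and φ ψ => .and (φ.scale r) (ψ.scale r)
  | .not φ => .not (φ.scale r)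
  | .until I φ ψ => .until (I.scale r) (φ.scale r) (ψ.scale r)
  | .since I φ ψ => .since (I.scale r) (φ.scale r) (ψ.scale r)

end MTL

/-- Terms of QMLO: `t ::= x | t + q` with `q ∈ ℚ` (variables are
represented by natural numbers). -/
inductive QTerm where
  | var : ℕ → QTerm
  | add : QTerm → ℚ → QTerm

namespace QTerm

/-- Value of a term under a valuation of the variables. -/
def val (v : ℕ → ℝ) : QTerm → ℝ
  | .var x => v x
  | .add t q => t.val v + (q : ℝ)

/-- The (unique) variable occurring in a term. -/
def fvar : QTerm → ℕ
  | .var x => x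
  | .add t _ => t.fvar

/-- Every shift in the term is `+1`; these are exactly the terms of
`FO(<,+1)`. -/
def OnlyPlusOne : QTerm → Prop
  | .var _ => True
  | .add t q => q = 1 ∧ t.OnlyPlusOne

/-- Every shift in the term is an integer. -/
def IntShifts : QTerm → Prop
  | .var _ => True
  | .add t q => q.den = 1 ∧ t.IntShifts

/-- The term uses no `+q` function at all (terms of `FO(<)`). -/
def NoShifts : QTerm → Prop
  | .var _ => True
  | .add _ _ => False

/-- Substitution of the term `s` for the variable `y`. -/
def subst (y : ℕ) (s : QTerm) : QTerm → QTerm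
  | .var z => if z = y then s else .var z
  | .add t q => .add (subst y s t) q

end QTerm

/-- Formulas of QMLO, the monadic logic of order and metric: first-order
logic with `<`, monadic predicates drawn from `P`, and `+q` (`q ∈ ℚ`). -/
inductive QMLO (P : Type*) where
  | tt : QMLO P
  | pred : P → QTerm → QMLO P
  | lt : QTerm → QTerm → QMLO P
  | and : QMLO P → QMLO P → QMLO P
  | not : QMLO P → QMLO P
  | ex : ℕ → QMLO P → QMLO P

namespace QMLO

variable {P : Type*}

/-- Satisfaction of a QMLO formula over the reals, by a signal
`f : ℝ → Set P` and a valuation `v` of the variables. -/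
def sat (f : ℝ → Set P) : QMLO P → (ℕ → ℝ) → Prop
  | .tt, _ => True
  | .pred p t, v => p ∈ f (t.val v)
  | .lt t₁ t₂, v => t₁.val v < t₂.val v
  | .and φ ψ, v => φ.sat f v ∧ ψ.sat f v
  | .not φ, v => ¬ φ.sat f v
  | .ex x φ, v => ∃ r : ℝ, φ.sat f (Function.update v x r)

/-- The free variables of a QMLO formula. -/
def freeVars : QMLO P → Set ℕ
  | .tt => ∅
  | .pred _ t => {t.fvar}
  | .lt t₁ t₂ => {t₁.fvar, t₂.fvar}
  | .and φ ψ => φ.freeVars ∪ ψ.freeVars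
  | .not φ => φ.freeVars
  | .ex x φ => φ.freeVars \ {x}

/-- All terms use only the `+1` function: the formula belongs to
`FO(<,+1)`. -/
def OnlyPlusOne : QMLO P → Prop
  | .tt => True
  | .pred _ t => t.OnlyPlusOne
  | .lt t₁ t₂ => t₁.OnlyPlusOne ∧ t₂.OnlyPlusOne
  | .and φ ψ => φ.OnlyPlusOne ∧ ψ.OnlyPlusOne
  | .not φ => φ.OnlyPlusOne
  | .ex _ φ => φ.OnlyPlusOne

/-- All shifts occurring in the formula are integers: the formula belongs to
`FO(<,+1)` up to the standard arithmetical shorthand. -/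
def IntShifts : QMLO P → Prop
  | .tt => True
  | .pred _ t => t.IntShifts
  | .lt t₁ t₂ => t₁.IntShifts ∧ t₂.IntShifts
  | .and φ ψ => φ.IntShifts ∧ ψ.IntShifts
  | .not φ => φ.IntShifts
  | .ex _ φ => φ.IntShifts

/-- The formula uses no `+q` function at all: it belongs to `FO(<)`. -/
def NoShifts : QMLO P → Prop
  | .tt => True
  | .pred _ t => t.NoShifts
  | .lt t₁ t₂ => t₁.NoShifts ∧ t₂.NoShifts
  | .and φ ψ => φ.NoShifts ∧ ψ.NoShifts
  | .not φ => φ.NoShifts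
  | .ex _ φ => φ.NoShifts

/-- Substitution of the term `s` for the free occurrences of variable `y`. -/
def subst (y : ℕ) (s : QTerm) : QMLO P → QMLO P
  | .tt => .tt
  | .pred p t => .pred p (t.subst y s)
  | .lt t₁ t₂ => .lt (t₁.subst y s) (t₂.subst y s)
  | .and φ ψ => .and (subst y s φ) (subst y s ψ)
  | .not φ => .not (subst y s φ)
  | .ex z φ => .ex z (if z = y then φ else subst y s φ)

/-- Scaling of a QMLO formula by a rational `r`: every function symbol `+q`
is replaced by `+(r·q)`. -/
def scale (r : ℚ) : QMLO P → QMLO P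
  | .tt => .tt
  | .pred p t => .pred p (tscale t)
  | .lt t₁ t₂ => .lt (tscale t₁) (tscale t₂)
  | .and φ ψ => .and (φ.scale r) (ψ.scale r)
  | .not φ => .not (φ.scale r)
  | .ex x φ => .ex x (φ.scale r)
where
  /-- scaling of terms -/
  tscale : QTerm → QTerm
  | .var x => .var x
  | .add t q => .add (tscale t) (r * q)

end QMLO

/-- `Bet t₁ t₂ B φ` expresses that `φ` belongs to the class `Bet(t₁,t₂)`,
where `B` is the ambient set of bound variables: every quantified subformula
has the form `∃z ((t₁ ≤ z < t₂) ∧ χ)` (with `t₁ ≤ z` rendered as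
`¬(z < t₁)`), and every atomic subformula `P(t)` has `t` a bound occurrence
of a variable. -/
inductive Bet {P : Type*} (t₁ t₂ : QTerm) : Set ℕ → QMLO P → Prop
  | tt {B} : Bet t₁ t₂ B .tt
  | pred {B} (p : P) (z : ℕ) (h : z ∈ B) : Bet t₁ t₂ B (.pred p (.var z))
  | lt {B} (s₁ s₂ : QTerm) : Bet t₁ t₂ B (.lt s₁ s₂)
  | and {B φ ψ} : Bet t₁ t₂ B φ → Bet t₁ t₂ B ψ → Bet t₁ t₂ B (.and φ ψ)
  | not {B φ} : Bet t₁ t₂ B φ → Bet t₁ t₂ B (.not φ)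
  | ex {B φ} (z : ℕ) :
      Bet t₁ t₂ (B ∪ {z}) φ →
      Bet t₁ t₂ B (.ex z (.and (.and (.not (.lt (.var z) t₁)) (.lt (.var z) t₂)) φ))
/-!
Cut the window `(r, r + 1)` at `r + 1/2`. If the earlier witness `y` lies in the first half,
then the later one `z` is either less than `1/2` after `y` (first disjunct) or in the second
half (third disjunct). Otherwise both lie in `(r + 1/2, r + 1)`, so both are less than `1/2`
apart and less than `1/2` before the point `r + 1`, from which the second disjunct looks back.
-/

open Set

namespace MTLIv

variable {t : ℝ}

@[simp]
lemma mem_ivLT {q : ℚ≥0} : (ivLT q).mem t ↔ t ∈ Ioo 0 (q : ℝ) := by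
  simp [mem, ivLT]

@[simp]
lemma mem_ivOO {a b : ℚ≥0} : (ivOO a b).mem t ↔ t ∈ Ioo (a : ℝ) b := by
  simp only [mem, ivOO, Bool.false_eq_true, if_false, WithTop.coe_eq_coe, forall_eq', mem_Ioo,
    and_iff_right_iff_imp, and_imp]
  exact fun ha _ => a.cast_nonneg.trans_lt ha

@[simp]
lemma mem_ivEQ {q : ℚ≥0} : (ivEQ q).mem t ↔ 0 < q ∧ t = q := by
  simp only [mem, ivEQ, if_true, WithTop.coe_eq_coe, forall_eq', ← le_antisymm_iff]
  constructor
  · rintro ⟨hpos, rfl⟩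
    exact ⟨by exact_mod_cast hpos, rfl⟩
  · rintro ⟨hq, rfl⟩
    exact ⟨by exact_mod_cast hq, rfl⟩

end MTLIv

namespace MTL

variable {P : Type*} {f : ℝ → Set P} {φ ψ : MTL P} {I : MTLIv} {r : ℝ}

@[simp]
lemma sat_or : (φ.or ψ).sat f r ↔ φ.sat f r ∨ ψ.sat f r := by
  simp only [MTL.or, sat, not_and_not_right]
  tauto

@[simp]
lemma sat_dia : (dia I φ).sat f r ↔ ∃ t, I.mem (t - r) ∧ φ.sat f t := by
  simp only [dia, sat, implies_true, and_true]
  exact exists_congr fun t => and_iff_right_of_imp fun h => sub_pos.1 h.1.1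

@[simp]
lemma sat_pdia : (pdia I φ).sat f r ↔ ∃ t, I.mem (r - t) ∧ φ.sat f t := by
  simp only [pdia, sat, implies_true, and_true]
  exact exists_congr fun t => and_iff_right_of_imp fun h => sub_pos.1 h.1.1

lemma sat_dia_ivLT {q : ℚ≥0} :
    (dia (ivLT q) φ).sat f r ↔ ∃ t ∈ Ioo r (r + q), φ.sat f t := by
  simp only [sat_dia, MTLIv.mem_ivLT, sub_mem_Ioo_iff_left, zero_add, add_comm (q : ℝ)]

lemma sat_dia_ivOO {a b : ℚ≥0} :
    (dia (ivOO a b) φ).sat f r ↔ ∃ t ∈ Ioo (r + a) (r + b), φ.sat f t := by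
  simp only [sat_dia, MTLIv.mem_ivOO, sub_mem_Ioo_iff_left, add_comm _ r]

lemma sat_dia_ivEQ {q : ℚ≥0} :
    (dia (ivEQ q) φ).sat f r ↔ 0 < q ∧ φ.sat f (r + q) := by
  simp only [sat_dia, MTLIv.mem_ivEQ, sub_eq_iff_eq_add', and_assoc, exists_and_left,
    exists_eq_left]

lemma sat_pdia_ivLT {q : ℚ≥0} :
    (pdia (ivLT q) φ).sat f r ↔ ∃ t ∈ Ioo (r - q) r, φ.sat f t := by
  simp only [sat_pdia, MTLIv.mem_ivLT, sub_mem_Ioo_iff_right, sub_zero]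

end MTL

lemma exists_pair_mem_Ioo_add_one_iff (S : Set ℝ) (r : ℝ) :
    (∃ y z, ((r < y ∧ y < z) ∧ z < r + 1) ∧ y ∈ S ∧ z ∈ S) ↔
      (∃ y ∈ Ioo r (r + 1 / 2), y ∈ S ∧ ∃ z ∈ Ioo y (y + 1 / 2), z ∈ S) ∨
      (∃ z ∈ Ioo (r + 1 - 1 / 2) (r + 1), z ∈ S ∧ ∃ y ∈ Ioo (z - 1 / 2) z, y ∈ S) ∨
      ((∃ y ∈ Ioo r (r + 1 / 2), y ∈ S) ∧ ∃ z ∈ Ioo (r + 1 / 2) (r + 1), z ∈ S) := by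
  constructor
  · rintro ⟨y, z, ⟨⟨hry, hyz⟩, hzr⟩, hy, hz⟩
    rcases lt_or_ge y (r + 1 / 2) with hy_first | hy_second
    · rcases lt_or_ge z (y + 1 / 2) with hz_near | hz_far
      · exact .inl ⟨y, ⟨hry, hy_first⟩, hy, z, ⟨hyz, hz_near⟩, hz⟩
      · exact .inr <| .inr ⟨⟨y, ⟨hry, hy_first⟩, hy⟩, z, ⟨by linarith, hzr⟩, hz⟩
    · exact .inr <| .inl ⟨z, ⟨by linarith, hzr⟩, hz, y, ⟨by linarith, hyz⟩, hy⟩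
  · rintro (⟨y, ⟨hry, hyr⟩, hy, z, ⟨hyz, hzy⟩, hz⟩ |
      ⟨z, ⟨hrz, hzr⟩, hz, y, ⟨hzy, hyz⟩, hy⟩ |
      ⟨⟨y, ⟨hry, hyr⟩, hy⟩, z, ⟨hrz, hzr⟩, hz⟩)
    · exact ⟨y, z, ⟨⟨hry, hyz⟩, by linarith⟩, hy, hz⟩
    · exact ⟨y, z, ⟨⟨by linarith, hyz⟩, hzr⟩, hy, hz⟩
    · exact ⟨y, z, ⟨⟨hry, by linarith⟩, hzr⟩, hy, hz⟩

theorem twice_within_one_unit_general {P : Type*} (p : P)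
    (f : ℝ → Set P) (r : ℝ) :
    (QMLO.ex 1 (.ex 2 (.and
        (.and (.and (.lt (.var 0) (.var 1)) (.lt (.var 1) (.var 2)))
              (.lt (.var 2) (.add (.var 0) 1)))
        (.and (.pred p (.var 1)) (.pred p (.var 2)))))).sat f (fun _ => r)
    ↔
    (MTL.or
      (MTL.dia (ivLT (1/2)) (.and (.atom p) (MTL.dia (ivLT (1/2)) (.atom p))))
      (MTL.or
        (MTL.dia (ivEQ 1)
          (MTL.pdia (ivLT (1/2))
            (.and (.atom p) (MTL.pdia (ivLT (1/2)) (.atom p)))))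
        (.and (MTL.dia (ivLT (1/2)) (.atom p))
              (MTL.dia (ivOO (1/2) 1) (.atom p))))).sat f r := by
  have half : ((1 / 2 : ℚ≥0) : ℝ) = 1 / 2 := by norm_num
  simp only [QMLO.sat, QTerm.val, Function.update_self, Rat.cast_one,
    Function.update_of_ne (show (0 : ℕ) ≠ 1 by decide),
    Function.update_of_ne (show (0 : ℕ) ≠ 2 by decide),
    Function.update_of_ne (show (1 : ℕ) ≠ 2 by decide)]
  simp only [MTL.sat_or, MTL.sat_dia_ivLT, MTL.sat_dia_ivOO, MTL.sat_dia_ivEQ,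
    MTL.sat_pdia_ivLT, MTL.sat, half, NNRat.cast_one, zero_lt_one, true_and]
  exact exists_pair_mem_Ioo_add_one_iff {t | p ∈ f t} r

/-- the `FO(<,+1)` formula
`φ(x) := ∃y ∃z (x < y < z < x+1 ∧ P(y) ∧ P(z))` (with `x,y,z` the variables
`0,1,2`) is equivalent to the MTL formula
`◇_{(0,1/2)}(P ∧ ◇_{(0,1/2)} P) ∨ ◇_{=1}(◆_{(0,1/2)}(P ∧ ◆_{(0,1/2)} P)) ∨
(◇_{(0,1/2)} P ∧ ◇_{(1/2,1)} P)`. -/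
theorem twice_within_one_unit {P : Type*} [Countable P] (p : P)
    (f : ℝ → Set P) (r : ℝ) :
    (QMLO.ex 1 (.ex 2 (.and
        (.and (.and (.lt (.var 0) (.var 1)) (.lt (.var 1) (.var 2)))
              (.lt (.var 2) (.add (.var 0) 1)))
        (.and (.pred p (.var 1)) (.pred p (.var 2)))))).sat f (fun _ => r)
    ↔
    (MTL.or
      (MTL.dia (ivLT (1/2)) (.and (.atom p) (MTL.dia (ivLT (1/2)) (.atom p))))
      (MTL.or
        (MTL.dia (ivEQ 1)
          (MTL.pdia (ivLT (1/2))
            (.and (.atom p) (MTL.pdia (ivLT (1/2)) (.atom p)))))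
        (.and (MTL.dia (ivLT (1/2)) (.atom p))
              (MTL.dia (ivOO (1/2) 1) (.atom p))))).sat f r :=
  twice_within_one_unit_general p f r
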